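/- arXiv:2409.03967 — 5 statements merged into one kernel-verified Lean document; each statement's English description precedes it below -/
import Mathlib

section
/- Let G be a group and let φ: G → Z G be a 1-cocycle with values in the group ring (satisfying φ(gh) = g·φ(h) + φ(g)). Define x ∈ Z^G by x(g) = φ(g⁻¹)(1). Then φ(g) = g·x − x for all g ∈ G. -/
/-- Every 1-cocycle `φ : G → ℤG` with group-ring coefficients is the coboundary of
`x ∈ ℤ^G` defined by `x(g) = φ(g⁻¹)(1)`. -/
theorem cocycle_is_coboundary_of_function {G : Type*} [Group G] (φ : G → G → ℤ)
    (hsupp : ∀ g : G, (Function.support (φ g)).Finite)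
    (hcocycle : ∀ g h : G, φ (g * h) = (fun k => φ h (g⁻¹ * k)) + φ g) :
    ∀ g k : G, φ g k = (fun w : G => φ w⁻¹ 1) (g⁻¹ * k) - φ k⁻¹ 1 := by
  intro g k
  have h := congrFun (hcocycle k⁻¹ g) 1
  simp [Pi.add_apply] at h
  simp [mul_inv_rev]
  linarith
end

section
/- Let G be a group and x ∈ Z^G such that φ_x(g) := g·x − x lies in the group ring Z G for every g. Then φ_x is a 1-coboundary with Z G coefficients (i.e., there exists y ∈ Z G with g·x − x = g·y − y for all g) if and only if x is constant outside a finite subset of G. -/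
/-! `φ_x = φ_y` says that `x - y` is invariant under left translation, hence constant; so `x` is
a finitely supported `y` plus a constant, and conversely `y := x - d` works when `x = d` off a
finite set. -/

theorem eq_add_const_of_forall_translate_sub_eq {G A : Type*} [Group G] [AddCommGroup A]
    {x y : G → A} (hxy : ∀ g h : G, x (g⁻¹ * h) - x h = y (g⁻¹ * h) - y h) (g : G) :
    x g = y g + (x 1 - y 1) := by
  have h := hxy g⁻¹ 1
  rw [inv_inv, mul_one] at h
  exact sub_eq_iff_eq_add'.mp (sub_eq_sub_iff_sub_eq_sub.mp h)

theorem support_sub_const_subset {α A : Type*} [AddGroup A] {x : α → A} {d : A} {F : Set α}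
    (hd : ∀ g ∉ F, x g = d) : (Function.support fun g => x g - d) ⊆ F :=
  Function.support_subset_iff'.mpr fun g hg => sub_eq_zero.mpr (hd g hg)

theorem coboundary_iff_constant_off_finite_general {G : Type*} [Group G] (x : G → ℤ) :
    (∃ y : G → ℤ, (Function.support y).Finite ∧
        ∀ g h : G, x (g⁻¹ * h) - x h = y (g⁻¹ * h) - y h) ↔
    (∃ d : ℤ, ∃ F : Set G, F.Finite ∧ ∀ g ∉ F, x g = d) := by
  constructor
  · rintro ⟨y, hy, hxy⟩
    refine ⟨x 1 - y 1, Function.support y, hy, fun g hg => ?_⟩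
    rw [eq_add_const_of_forall_translate_sub_eq hxy g, Function.notMem_support.mp hg, zero_add]
  · rintro ⟨d, F, hF, hd⟩
    exact ⟨fun g => x g - d, hF.subset (support_sub_const_subset hd), fun g h => by ring⟩

/-- Suppose `x ∈ ℤ^G` is such that `φ_x(g) = g·x − x` lies in the group ring `ℤG` for all
`g`.  Then `φ_x` is a 1-coboundary with `ℤG`-coefficients iff `x` is constant outside a
finite subset of `G`. -/
theorem coboundary_iff_constant_off_finite {G : Type*} [Group G] (x : G → ℤ)
    (hval : ∀ g : G, (Function.support fun h => x (g⁻¹ * h) - x h).Finite) :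
    (∃ y : G → ℤ, (Function.support y).Finite ∧
        ∀ g h : G, x (g⁻¹ * h) - x h = y (g⁻¹ * h) - y h) ↔
    (∃ d : ℤ, ∃ F : Set G, F.Finite ∧ ∀ g ∉ F, x g = d) :=
  coboundary_iff_constant_off_finite_general x
end

section
/- Let G be a group acting on a tree T without edge inversions. If G admits a generating set {a_1, ..., a_n} such that each a_i and each product a_i·a_j (for i ≠ j) fixes a vertex of T, then G has a global fixed vertex in T. -/
namespace SerreAux

open SimpleGraph Walk

variable {V : Type*} {T : SimpleGraph V}

/-- `m` lies on a geodesic from `a` to `b`. -/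
def OnGeod (T : SimpleGraph V) (a m b : V) : Prop :=
  T.dist a m + T.dist m b = T.dist a b

lemma path_length_eq_dist (hT : T.IsTree) {u v : V} (W : T.Walk u v) (hW : W.IsPath) :
    W.length = T.dist u v := by
  obtain ⟨P, hP, hlen⟩ := hT.isConnected.exists_path_of_dist u v
  have h : (⟨W, hW⟩ : T.Path u v) = ⟨P, hP⟩ := hT.IsAcyclic.path_unique _ _
  have := congrArg (fun p : T.Path u v => (p : T.Walk u v).length) h
  simpa [hlen] using this

lemma onGeod_of_mem_support (hT : T.IsTree) {u v : V} {W : T.Walk u v} (hW : W.IsPath)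
    {m : V} (hm : m ∈ W.support) : OnGeod T u m v := by
  classical
  have l1 := path_length_eq_dist hT _ (hW.takeUntil hm)
  have l2 := path_length_eq_dist hT _ (hW.dropUntil hm)
  have l3 := path_length_eq_dist hT _ hW
  have h := congrArg Walk.length (W.take_spec hm)
  rw [Walk.length_append] at h
  unfold OnGeod
  omega

lemma isPath_append {a b c : V} {P : T.Walk a b} {Q : T.Walk b c}
    (hP : P.IsPath) (hQ : Q.IsPath)
    (h : ∀ y, y ∈ P.support → y ∈ Q.support → y = b) : (P.append Q).IsPath := by
  rw [Walk.isPath_def, Walk.support_append]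
  refine List.Nodup.append hP.support_nodup hQ.support_nodup.tail ?_
  intro y hy1 hy2
  have hy2' : y ∈ Q.support := List.mem_of_mem_tail hy2
  have := h y hy1 hy2'
  subst this
  have hnodup := hQ.support_nodup
  rw [Q.support_eq_cons] at hnodup
  exact (List.nodup_cons.mp hnodup).1 (by simpa using hy2)

lemma exists_path_through (hT : T.IsTree) {a m b : V} (h : OnGeod T a m b) :
    ∃ W : T.Walk a b, W.IsPath ∧ m ∈ W.support := by
  obtain ⟨P, hP, hPl⟩ := hT.isConnected.exists_path_of_dist a m
  obtain ⟨Q, hQ, hQl⟩ := hT.isConnected.exists_path_of_dist m b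
  have hdisj : ∀ y, y ∈ P.support → y ∈ Q.support → y = m := by
    intro y hyP hyQ
    have g1 := onGeod_of_mem_support hT hP hyP
    have g2 := onGeod_of_mem_support hT hQ hyQ
    have tri := hT.isConnected.dist_triangle (u := a) (v := y) (w := b)
    have hcm : T.dist y m = T.dist m y := T.dist_comm
    unfold OnGeod at h g1 g2
    have : T.dist y m = 0 := by omega
    exact (hT.isConnected.dist_eq_zero_iff.mp (hcm ▸ this))
  refine ⟨P.append Q, isPath_append hP hQ hdisj, ?_⟩
  rw [Walk.mem_support_append_iff]
  exact Or.inl P.end_mem_support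

lemma onGeod_unique (hT : T.IsTree) {a b m p : V}
    (hm : OnGeod T a m b) (hp : OnGeod T a p b) (h : T.dist a m = T.dist a p) : m = p := by
  obtain ⟨W, hW, hmW⟩ := exists_path_through hT hm
  obtain ⟨W', hW', hpW'⟩ := exists_path_through hT hp
  classical
  have heq : (⟨W, hW⟩ : T.Path a b) = ⟨W', hW'⟩ := hT.IsAcyclic.path_unique _ _
  have hWW' : W = W' := Subtype.mk_eq_mk.mp heq
  have hpW : p ∈ W.support := hWW' ▸ hpW'
  rw [← W.take_spec hpW, Walk.mem_support_append_iff] at hmW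
  rcases hmW with hm1 | hm2
  · have g := onGeod_of_mem_support hT (hW.takeUntil hpW) hm1
    unfold OnGeod at g hm hp
    have : T.dist m p = 0 := by omega
    exact hT.isConnected.dist_eq_zero_iff.mp this
  · have g := onGeod_of_mem_support hT (hW.dropUntil hpW) hm2
    unfold OnGeod at g hm hp
    have hc1 : T.dist m b = T.dist a b - T.dist a m := by omega
    have : T.dist p m = 0 := by omega
    exact (hT.isConnected.dist_eq_zero_iff.mp ((T.dist_comm (u := m)) ▸ this)).symm

lemma exists_median (hT : T.IsTree) (x y z : V) :
    ∃ m, OnGeod T x m y ∧ OnGeod T x m z ∧ OnGeod T y m z := by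
  obtain ⟨W, hW, hWl⟩ := hT.isConnected.exists_path_of_dist x y
  -- pick m on W minimizing dist to z
  have hne : ∃ k, ∃ m ∈ W.support, T.dist m z = k := ⟨_, x, W.start_mem_support, rfl⟩
  classical
  obtain ⟨m, hmW, hmd⟩ := Nat.sInf_mem (s := {k | ∃ m ∈ W.support, T.dist m z = k}) hne
  have hmin : ∀ y' ∈ W.support, T.dist m z ≤ T.dist y' z := by
    intro y' hy'
    rw [hmd]
    exact Nat.sInf_le ⟨y', hy', rfl⟩
  obtain ⟨Q, hQ, hQl⟩ := hT.isConnected.exists_path_of_dist m z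
  have key : ∀ {c : V} (P : T.Walk c m), P.IsPath → (∀ v ∈ P.support, v ∈ W.support) →
      OnGeod T c m z := by
    intro c P hP hPsub
    have hdisj : ∀ y', y' ∈ P.support → y' ∈ Q.support → y' = m := by
      intro y' h1 h2
      have g2 := onGeod_of_mem_support hT hQ h2
      have hmin' := hmin y' (hPsub y' h1)
      unfold OnGeod at g2
      have : T.dist m y' = 0 := by omega
      exact (hT.isConnected.dist_eq_zero_iff.mp this).symm
    have hpath := isPath_append hP hQ hdisj
    have hlen := path_length_eq_dist hT _ hpath
    rw [Walk.length_append] at hlen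
    have hPl := path_length_eq_dist hT _ hP
    unfold OnGeod
    omega
  refine ⟨m, onGeod_of_mem_support hT hW hmW, ?_, ?_⟩
  · exact key (W.takeUntil m hmW) (hW.takeUntil hmW)
      (fun v hv => W.support_takeUntil_subset hmW hv)
  · refine key (W.dropUntil m hmW).reverse (hW.dropUntil hmW).reverse ?_
    intro v hv
    rw [Walk.support_reverse, List.mem_reverse] at hv
    exact W.support_dropUntil_subset hmW hv

section Action

variable {G : Type*} [Group G] [MulAction G V]
variable (hact : ∀ (g : G) (u v : V), T.Adj u v → T.Adj (g • u) (g • v))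

include hact in
/-- the action is by isometries -/
lemma dist_smul (hT : T.IsTree) (g : G) (u v : V) :
    T.dist (g • u) (g • v) = T.dist u v := by
  have key : ∀ (g : G) (u v : V), T.dist (g • u) (g • v) ≤ T.dist u v := by
    intro g u v
    obtain ⟨P, hP, hPl⟩ := hT.isConnected.exists_path_of_dist u v
    let f : T →g T := ⟨fun w => g • w, fun h => hact g _ _ h⟩
    have := SimpleGraph.dist_le (P.map f)
    simpa [Walk.length_map, hPl, f] using this
  refine le_antisymm (key g u v) ?_
  have := key g⁻¹ (g • u) (g • v)
  simpa using this

include hact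

lemma fix_convex (hT : T.IsTree) {g : G} {u v m : V} (hu : g • u = u) (hv : g • v = v)
    (hm : OnGeod T u m v) : g • m = m := by
  have h1 : OnGeod T u (g • m) v := by
    unfold OnGeod at hm ⊢
    rw [show T.dist u (g • m) = T.dist u m by
          conv_lhs => rw [← hu]
          exact dist_smul hact hT g u m,
        show T.dist (g • m) v = T.dist m v by
          conv_lhs => rw [← hv]
          exact dist_smul hact hT g m v]
    exact hm
  exact (onGeod_unique hT h1 hm (by
    conv_lhs => rw [← hu]
    exact dist_smul hact hT g u m)).symm ▸ rfl

lemma midpoint_fixed (hT : T.IsTree) {s : G} {x : V} (hx : s • x = x) (v : V) :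
    ∃ m, s • m = m ∧ OnGeod T v m (s • v) ∧ T.dist v m = T.dist m (s • v) := by
  obtain ⟨m, h1, h2, h3⟩ := exists_median hT v (s • v) x
  have hdx : T.dist (s • v) x = T.dist v x := by
    conv_lhs => rw [← hx]
    exact dist_smul hact hT s v x
  unfold OnGeod at h2 h3
  have heq : T.dist v m = T.dist (s • v) m := by omega
  have hsm : OnGeod T (s • v) (s • m) x := by
    unfold OnGeod
    rw [show T.dist (s • v) (s • m) = T.dist v m from dist_smul hact hT s v m,
        show T.dist (s • m) x = T.dist m x by
          conv_lhs => rw [← hx]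
          exact dist_smul hact hT s m x]
    omega
  have hm' : OnGeod T (s • v) m x := h3
  have hfix : s • m = m :=
    onGeod_unique hT hsm hm' (by have e1 := dist_smul hact hT s v m; omega)
  refine ⟨m, hfix, h1, ?_⟩
  unfold OnGeod at h1
  have := T.dist_comm (u := s • v) (v := m)
  omega

lemma pairwise_fix (hT : T.IsTree) {g h : G}
    (hg : ∃ p : V, g • p = p) (hh : ∃ q : V, h • q = q) (hgh : ∃ x : V, (g * h) • x = x) :
    ∃ v : V, g • v = v ∧ h • v = v := by
  classical
  obtain ⟨x, hx⟩ := hgh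
  have hne : ∃ k, ∃ p q : V, g • p = p ∧ h • q = q ∧ T.dist p q = k := by
    obtain ⟨p, hp⟩ := hg; obtain ⟨q, hq⟩ := hh; exact ⟨_, p, q, hp, hq, rfl⟩
  obtain ⟨p, q, hp, hq, hd⟩ := Nat.sInf_mem (s := {k | ∃ p q : V, g • p = p ∧ h • q = q ∧ T.dist p q = k}) hne
  set D := sInf {k | ∃ p q : V, g • p = p ∧ h • q = q ∧ T.dist p q = k} with hD
  have hmin : ∀ p' q', g • p' = p' → h • q' = q' → D ≤ T.dist p' q' := by
    intro p' q' h1 h2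
    exact Nat.sInf_le ⟨p', q', h1, h2, rfl⟩
  -- distance from p to g•q
  have hgqp : T.dist (g • q) p = D := by
    conv_lhs => rw [← hp]
    rw [dist_smul hact hT g q p, T.dist_comm]
    exact hd
  -- median of q, g•q, p is fixed by g, hence equals p
  obtain ⟨m, h1, h2, h3⟩ := exists_median hT q (g • q) p
  have hcqp : T.dist q p = T.dist p q := T.dist_comm
  have hcpgq : T.dist p (g • q) = T.dist (g • q) p := T.dist_comm
  have hqm : T.dist q m = T.dist (g • q) m := by
    unfold OnGeod at h2 h3; omega
  have hgm : g • m = m := by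
    have hsm : OnGeod T (g • q) (g • m) p := by
      unfold OnGeod
      rw [show T.dist (g • q) (g • m) = T.dist q m from dist_smul hact hT g q m,
          show T.dist (g • m) p = T.dist m p by
            conv_lhs => rw [← hp]
            exact dist_smul hact hT g m p]
      unfold OnGeod at h3
      omega
    exact onGeod_unique hT hsm h3 (by
      have e1 := dist_smul hact hT g q m; omega)
  have hmq : D ≤ T.dist m q := hmin m q hgm hq
  have hmp : m = p := by
    unfold OnGeod at h2
    have hcmq : T.dist m q = T.dist q m := T.dist_comm
    have hz : T.dist m p = 0 := by omega
    exact hT.isConnected.dist_eq_zero_iff.mp hz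
  rw [hmp] at h1
  -- now q --p-- g•q is a geodesic of length 2D
  have hgeod : OnGeod T q p (g • q) := h1
  have hlen : T.dist q (g • q) = 2 * D := by
    unfold OnGeod at hgeod
    omega
  -- midpoint of [q, (g*h)•q] is fixed by g*h; but (g*h)•q = g•q
  have hsq : (g * h) • q = g • q := by rw [mul_smul, hq]
  obtain ⟨m', hm'fix, hm'g, hm'half⟩ := midpoint_fixed hact hT hx q
  rw [hsq] at hm'g hm'half
  have hm'p : m' = p := by
    refine onGeod_unique hT hm'g hgeod ?_
    unfold OnGeod at hm'g hgeod
    omega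
  rw [hm'p] at hm'fix
  have hhp : h • p = p := by
    have h1' : g • (h • p) = p := by rw [← mul_smul]; exact hm'fix
    have h2' : g⁻¹ • (g • (h • p)) = g⁻¹ • p := congrArg (g⁻¹ • ·) h1'
    have h3' : g⁻¹ • p = p := by
      conv_lhs => rw [← hp]
      simp
    simpa [h3'] using h2'
  exact ⟨p, hp, hhp⟩

end Action

/-- Convexity of a set of vertices. -/
def Conv (T : SimpleGraph V) (A : Set V) : Prop :=
  ∀ a ∈ A, ∀ b ∈ A, ∀ m, OnGeod T a m b → m ∈ A

lemma helly3 (hT : T.IsTree) {A B C : Set V} (hA : Conv T A) (hB : Conv T B) (hC : Conv T C)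
    {x y z : V} (hx : x ∈ B ∩ C) (hy : y ∈ A ∩ C) (hz : z ∈ A ∩ B) :
    ∃ m, m ∈ A ∧ m ∈ B ∧ m ∈ C := by
  obtain ⟨m, h1, h2, h3⟩ := exists_median hT x y z
  exact ⟨m, hA y hy.1 z hz.1 m h3, hB x hx.1 z hz.2 m h2, hC x hx.2 y hy.2 m h1⟩

lemma helly (hT : T.IsTree) : ∀ (n : ℕ) (A : Fin n → Set V),
    (∀ i, (A i).Nonempty) → (∀ i, Conv T (A i)) →
    (∀ i j, (A i ∩ A j).Nonempty) → ∃ v, ∀ i, v ∈ A i := by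
  intro n
  induction n with
  | zero => exact fun A _ _ _ => ⟨hT.isConnected.nonempty.some, fun i => i.elim0⟩
  | succ n ih =>
    intro A hne hconv hpair
    cases n with
    | zero =>
      obtain ⟨v, hv⟩ := hne 0
      refine ⟨v, fun i => ?_⟩
      have h0 : i = 0 := Fin.ext (by omega)
      rwa [h0]
    | succ n =>
      set B : Fin (n + 1) → Set V := fun i => A i.castSucc ∩ A (Fin.last (n + 1)) with hB
      have hBne : ∀ i, (B i).Nonempty := fun i => hpair _ _
      have hBconv : ∀ i, Conv T (B i) := by
        intro i a ha b hb m hm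
        exact ⟨hconv _ a ha.1 b hb.1 m hm, hconv _ a ha.2 b hb.2 m hm⟩
      have hBpair : ∀ i j, (B i ∩ B j).Nonempty := by
        intro i j
        obtain ⟨x, hx⟩ := hpair i.castSucc j.castSucc
        obtain ⟨y, hy⟩ := hpair j.castSucc (Fin.last (n + 1))
        obtain ⟨z, hz⟩ := hpair i.castSucc (Fin.last (n + 1))
        obtain ⟨m, h1, h2, h3⟩ := helly3 hT (hconv (Fin.last (n+1))) (hconv i.castSucc)
          (hconv j.castSucc) ⟨hx.1, hx.2⟩ ⟨hy.2, hy.1⟩ ⟨hz.2, hz.1⟩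
        exact ⟨m, ⟨h2, h1⟩, ⟨h3, h1⟩⟩
      obtain ⟨v, hv⟩ := ih B hBne hBconv hBpair
      refine ⟨v, fun i => ?_⟩
      refine Fin.lastCases ?_ ?_ i
      · exact (hv 0).2
      · exact fun j => (hv j).1

end SerreAux

/-- **Serre's criterion.**  Let `G` act on a tree `T` by graph automorphisms without edge
inversions.  If `G` is generated by `a_1, …, a_n` such that each `a i` and each product
`a i * a j` (`i ≠ j`) fixes a vertex, then `G` fixes a vertex globally. -/
theorem serre_criterion {V : Type*} (T : SimpleGraph V) (hT : T.IsTree)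
    {G : Type*} [Group G] [MulAction G V]
    (hact : ∀ (g : G) (u v : V), T.Adj u v → T.Adj (g • u) (g • v))
    (hnoinv : ∀ (g : G) (u v : V), T.Adj u v → ¬(g • u = v ∧ g • v = u))
    {n : ℕ} (a : Fin n → G) (hgen : Subgroup.closure (Set.range a) = ⊤)
    (hell : ∀ i : Fin n, ∃ v : V, a i • v = v)
    (hell2 : ∀ i j : Fin n, i ≠ j → ∃ v : V, (a i * a j) • v = v) :
    ∃ v : V, ∀ g : G, g • v = v := by
  classical
  set A : Fin n → Set V := fun i => {v | a i • v = v} with hA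
  have hne : ∀ i, (A i).Nonempty := fun i => hell i
  have hconv : ∀ i, SerreAux.Conv T (A i) := fun i u hu v hv m hm =>
    SerreAux.fix_convex hact hT hu hv hm
  have hpair : ∀ i j, (A i ∩ A j).Nonempty := by
    intro i j
    by_cases hij : i = j
    · subst hij
      obtain ⟨v, hv⟩ := hne i
      exact ⟨v, hv, hv⟩
    · obtain ⟨v, h1, h2⟩ := SerreAux.pairwise_fix hact hT (hell i) (hell j) (hell2 i j hij)
      exact ⟨v, h1, h2⟩
  obtain ⟨v, hv⟩ := SerreAux.helly hT n A hne hconv hpair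
  refine ⟨v, fun g => ?_⟩
  have hsub : Set.range a ⊆ (MulAction.stabilizer G v : Subgroup G) := by
    rintro - ⟨i, rfl⟩
    exact hv i
  have hle : Subgroup.closure (Set.range a) ≤ MulAction.stabilizer G v :=
    (Subgroup.closure_le _).mpr hsub
  rw [hgen] at hle
  exact hle (Subgroup.mem_top g)
end

section
/- Let G be a group, A a free factor of G, N a characteristic subgroup of G, and suppose φ is an automorphism of A. Then φ(N ∩ A) = N ∩ A; that is, N ∩ A is a characteristic subgroup of A. -/
/-- `A ≤ G` is a free factor of `G` if `G` is the internal free product of `A` and some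
subgroup `B`, i.e. there is an isomorphism `A ∗ B ≃* G` restricting to the inclusions. -/
def Subgroup.IsFreeFactor {G : Type*} [Group G] (A : Subgroup G) : Prop :=
  ∃ B : Subgroup G, ∃ e : Monoid.Coprod A B ≃* G,
    (∀ a : A, e (Monoid.Coprod.inl a) = (a : G)) ∧
    (∀ b : B, e (Monoid.Coprod.inr b) = (b : G))

namespace Subgroup

variable {G : Type*} [Group G] {A : Subgroup G}

/-- The extension is `φ ∗ id_B` on `A ∗ B`, transported to `G`. -/
theorem IsFreeFactor.exists_mulEquiv_extending (hA : A.IsFreeFactor) (φ : A ≃* A) :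
    ∃ ψ : G ≃* G, ψ.toMonoidHom.comp A.subtype = A.subtype.comp φ.toMonoidHom := by
  obtain ⟨B, e, he, -⟩ := hA
  refine ⟨(e.symm.trans (MulEquiv.coprodCongr φ (MulEquiv.refl B))).trans e, ?_⟩
  ext a
  have hinl : MulEquiv.coprodCongr φ (MulEquiv.refl B) (Monoid.Coprod.inl a) =
      Monoid.Coprod.inl (φ a) := rfl
  simp only [MonoidHom.comp_apply, MulEquiv.coe_toMonoidHom, MulEquiv.trans_apply, coe_subtype]
  rw [← he a, e.symm_apply_apply, hinl, he]

theorem map_subgroupOf_of_extending (H : Subgroup G) {φ : A ≃* A} {ψ : G ≃* G}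
    (hψ : ψ.toMonoidHom.comp A.subtype = A.subtype.comp φ.toMonoidHom) :
    (H.subgroupOf A).map φ.toMonoidHom = (H.map ψ.toMonoidHom).subgroupOf A := by
  have hψ_symm : ψ.symm.toMonoidHom.comp A.subtype = A.subtype.comp φ.symm.toMonoidHom := by
    ext a
    simpa using congrArg ψ.symm (DFunLike.congr_fun hψ (φ.symm a)).symm
  simp only [subgroupOf, map_equiv_eq_comap_symm', comap_comap, hψ_symm]

end Subgroup

/-- If `A` is a free factor of `G` and `N ≤ G` is characteristic, then `N ∩ A` is a
characteristic subgroup of `A`: every automorphism `φ` of `A` satisfies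
`φ(N ∩ A) = N ∩ A`. -/
theorem inter_characteristic_of_free_factor {G : Type*} [Group G]
    (A : Subgroup G) (hA : A.IsFreeFactor) (N : Subgroup G) [N.Characteristic]
    (φ : A ≃* A) :
    Subgroup.map φ.toMonoidHom ((N ⊓ A).subgroupOf A) = (N ⊓ A).subgroupOf A := by
  obtain ⟨ψ, hψ⟩ := hA.exists_mulEquiv_extending φ
  rw [Subgroup.inf_subgroupOf_right, Subgroup.map_subgroupOf_of_extending N hψ,
    Subgroup.characteristic_iff_map_eq.mp ‹_› ψ]
end

section
/- Let F_∞ be the free group on a countably infinite set of generators. Then F_∞ has no proper finite-index characteristic subgroup. -/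
private lemma aux_of_mem {N : Subgroup (FreeGroup ℕ)} [N.Characteristic] {i j : ℕ}
    (hij : i ≠ j) (h : (FreeGroup.of i)⁻¹ * FreeGroup.of j ∈ N) : FreeGroup.of i ∈ N := by
  set f : FreeGroup ℕ →* FreeGroup ℕ :=
    FreeGroup.lift (fun n => if n = j then FreeGroup.of j * FreeGroup.of i else FreeGroup.of n)
    with hf
  set g : FreeGroup ℕ →* FreeGroup ℕ :=
    FreeGroup.lift (fun n => if n = j then FreeGroup.of j * (FreeGroup.of i)⁻¹ else FreeGroup.of n)
    with hg
  have hfi : f (FreeGroup.of i) = FreeGroup.of i := by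
    rw [hf, FreeGroup.lift_apply_of, if_neg hij]
  have hfj : f (FreeGroup.of j) = FreeGroup.of j * FreeGroup.of i := by
    rw [hf, FreeGroup.lift_apply_of, if_pos rfl]
  have hgi : g (FreeGroup.of i) = FreeGroup.of i := by
    rw [hg, FreeGroup.lift_apply_of, if_neg hij]
  have hgj : g (FreeGroup.of j) = FreeGroup.of j * (FreeGroup.of i)⁻¹ := by
    rw [hg, FreeGroup.lift_apply_of, if_pos rfl]
  have hgf : g.comp f = MonoidHom.id _ := by
    apply FreeGroup.ext_hom
    intro a
    by_cases ha : a = j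
    · subst ha
      simp [hfj, hgj, hgi, mul_assoc]
    · simp only [MonoidHom.comp_apply, MonoidHom.id_apply]
      rw [hf, FreeGroup.lift_apply_of, if_neg ha, hg, FreeGroup.lift_apply_of, if_neg ha]
  have hfg : f.comp g = MonoidHom.id _ := by
    apply FreeGroup.ext_hom
    intro a
    by_cases ha : a = j
    · subst ha
      simp [hfj, hgj, hfi, mul_assoc]
    · simp only [MonoidHom.comp_apply, MonoidHom.id_apply]
      rw [hg, FreeGroup.lift_apply_of, if_neg ha, hf, FreeGroup.lift_apply_of, if_neg ha]
  let θ : FreeGroup ℕ ≃* FreeGroup ℕ := MonoidHom.toMulEquiv f g hgf hfg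
  have hθ : N.comap θ.toMonoidHom = N := (inferInstance : N.Characteristic).fixed θ
  have hθmem : θ ((FreeGroup.of i)⁻¹ * FreeGroup.of j) ∈ N := by
    have : (FreeGroup.of i)⁻¹ * FreeGroup.of j ∈ N.comap θ.toMonoidHom := by rw [hθ]; exact h
    exact this
  have hθval : θ ((FreeGroup.of i)⁻¹ * FreeGroup.of j)
      = (FreeGroup.of i)⁻¹ * (FreeGroup.of j * FreeGroup.of i) := by
    have : ∀ x, θ x = f x := fun x => rfl
    rw [this, map_mul, map_inv, hfi, hfj]
  rw [hθval] at hθmem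
  have := N.mul_mem (N.inv_mem h) hθmem
  have heq : (((FreeGroup.of i)⁻¹ * FreeGroup.of j)⁻¹ *
      ((FreeGroup.of i)⁻¹ * (FreeGroup.of j * FreeGroup.of i))) = FreeGroup.of i := by
    group
  rwa [heq] at this

/-- The free group `F_∞` on countably many generators has no proper finite-index
characteristic subgroup. -/
theorem no_proper_finite_index_characteristic (N : Subgroup (FreeGroup ℕ))
    [N.Characteristic] (hfin : N.index ≠ 0) : N = ⊤ := by
  have hfinite : Finite (FreeGroup ℕ ⧸ N) := Nat.finite_of_card_ne_zero hfin
  obtain ⟨i, j, hne, heq⟩ := Finite.exists_ne_map_eq_of_infinite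
    (fun n : ℕ => (QuotientGroup.mk (FreeGroup.of n) : FreeGroup ℕ ⧸ N))
  have hmem : (FreeGroup.of i)⁻¹ * FreeGroup.of j ∈ N := QuotientGroup.eq.mp heq
  have hi : FreeGroup.of i ∈ N := aux_of_mem hne hmem
  have hall : ∀ k, FreeGroup.of k ∈ N := by
    intro k
    let σ : FreeGroup ℕ ≃* FreeGroup ℕ := FreeGroup.freeGroupCongr (Equiv.swap k i)
    have hσ : N.comap σ.toMonoidHom = N := (inferInstance : N.Characteristic).fixed σ
    have : FreeGroup.of k ∈ N.comap σ.toMonoidHom := by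
      simp only [Subgroup.mem_comap]
      show σ (FreeGroup.of k) ∈ N
      have : σ (FreeGroup.of k) = FreeGroup.of i := by
        simp [σ, FreeGroup.freeGroupCongr, Equiv.swap_apply_left]
      rw [this]; exact hi
    rwa [hσ] at this
  rw [Subgroup.eq_top_iff']
  intro x
  refine FreeGroup.induction_on x N.one_mem hall (fun a ha => N.inv_mem ha)
    (fun a b ha hb => N.mul_mem ha hb)
end
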